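/- Let S ⊆ ℝ^d be a closed set, x ∈ ∂S, and suppose S is wedged at x. Let K ⊆ ℝ^d be nonempty, compact and convex. Then the following are equivalent: (a) for every p ∈ N_S^C(x) ∖ {0} there exists v ∈ K with ⟨v, p⟩ < 0; (b) K ∩ interior(T_S^C(x)) ≠ ∅. -/

import Mathlib

open Set Metric Filter Topology MeasureTheory
open scoped Pointwise

noncomputable section

/-- Euclidean space `ℝ^d`. -/
abbrev Euc (d : ℕ) := EuclideanSpace ℝ (Fin d)


/-- Real inner product on `ℝ^d`. -/
def rinner {d : ℕ} (x y : Euc d) : ℝ := inner ℝ x y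

/-- Limiting proximal normal directions to `S` at `x`. -/
def limProxDirs {d : ℕ} (S : Set (Euc d)) (x : Euc d) : Set (Euc d) :=
  {v | ‖v‖ = 1 ∧ ∃ y w : ℕ → Euc d,
    (∀ n, y n ∈ S) ∧ Tendsto y atTop (𝓝 x) ∧
    (∀ n, w n ≠ 0) ∧ Tendsto w atTop (𝓝 (0 : Euc d)) ∧
    (∀ n, infDist (y n + w n) S = ‖w n‖) ∧
    Tendsto (fun n => (‖w n‖)⁻¹ • w n) atTop (𝓝 v)}

/-- Clarke (proximal) normal cone to `S` at `x`. -/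
def clarkeNormalCone {d : ℕ} (S : Set (Euc d)) (x : Euc d) : Set (Euc d) :=
  {p | ∃ lam : ℝ, 0 ≤ lam ∧
    ∃ ξ ∈ closure (convexHull ℝ ({0} ∪ limProxDirs S x)), p = lam • ξ}

/-- `S` is wedged at `x` if its Clarke normal cone at `x` is pointed. -/
def WedgedAt {d : ℕ} (S : Set (Euc d)) (x : Euc d) : Prop :=
  clarkeNormalCone S x ∩ (-(clarkeNormalCone S x)) = {0}

/-- Clarke tangent cone: the polar cone of the Clarke normal cone. -/
def clarkeTangentCone {d : ℕ} (S : Set (Euc d)) (x : Euc d) : Set (Euc d) :=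
  {v | ∀ p ∈ clarkeNormalCone S x, rinner p v ≤ 0}

/-- Bouligand tangent cone. -/
def bouligandCone {d : ℕ} (S : Set (Euc d)) (x : Euc d) : Set (Euc d) :=
  {v | Filter.liminf (fun t : ℝ => infDist (x + t • v) S / t) (𝓝[>] (0:ℝ)) = 0}

/-- The wedge `W(v, ε) = {s • w : w ∈ v + εB, s ∈ [0, ε]}`. -/
def wedge {d : ℕ} (v : Euc d) (ε : ℝ) : Set (Euc d) :=
  {p | ∃ w ∈ ball v ε, ∃ s ∈ Icc (0:ℝ) ε, p = s • w}

/-- Signed distance function of a closed set. -/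
def signedDist' {d : ℕ} (Z : Set (Euc d)) (x : Euc d) : ℝ :=
  infDist x Z - infDist x (closure Zᶜ)

/-- `r`-inner approximation `S_r = {x : dist(x, ℝ^d ∖ S) ≥ r}`. -/
def innerApprox {d : ℕ} (S : Set (Euc d)) (r : ℝ) : Set (Euc d) :=
  {x | r ≤ infDist x Sᶜ}

/-- `Q(S,r) = S ∖ interior S_r`. -/
def crown {d : ℕ} (S : Set (Euc d)) (r : ℝ) : Set (Euc d) :=
  S \ interior (innerApprox S r)

/-- `r(x) = dist(x, closure(ℝ^d ∖ S))`. -/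
def bdist {d : ℕ} (S : Set (Euc d)) (x : Euc d) : ℝ := infDist x (closure Sᶜ)

/-- (F1): continuity on `ℝ^d × U` and uniform Lipschitz continuity in the state. -/
def CondF1 {d m : ℕ} (f : Euc d → Euc m → Euc d) (Uset : Set (Euc m)) : Prop :=
  ContinuousOn (fun p : Euc d × Euc m => f p.1 p.2) (univ ×ˢ Uset) ∧
  ∃ Lf : ℝ, 0 ≤ Lf ∧ ∀ x y : Euc d, ∀ u ∈ Uset, ‖f x u - f y u‖ ≤ Lf * ‖x - y‖

/-- (F2): sublinear growth. -/
def CondF2 {d m : ℕ} (f : Euc d → Euc m → Euc d) (Uset : Set (Euc m)) : Prop :=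
  ∃ Cf : ℝ, 0 ≤ Cf ∧ ∀ (x : Euc d), ∀ u ∈ Uset, ‖f x u‖ ≤ Cf * (1 + ‖x‖)

/-- (F3): convexity of velocity sets. -/
def CondF3 {d m : ℕ} (f : Euc d → Euc m → Euc d) (Uset : Set (Euc m)) : Prop :=
  ∀ x : Euc d, Convex ℝ ((fun u => f x u) '' Uset)

/-- (S1): `S` compact and wedged at every boundary point. -/
def CondS1 {d : ℕ} (S : Set (Euc d)) : Prop :=
  IsCompact S ∧ ∀ x ∈ frontier S, WedgedAt S x

/-- (S2): strict inwardness. -/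
def CondS2 {d m : ℕ} (f : Euc d → Euc m → Euc d) (Uset : Set (Euc m)) (S : Set (Euc d)) : Prop :=
  ∀ x ∈ frontier S, ∀ p ∈ clarkeNormalCone S x, p ≠ 0 → ∃ u ∈ Uset, rinner (f x u) p < 0

/-- A measurable open-loop control with values in `Uset` on `[0,T]`. -/
def IsAdmControl {m : ℕ} (Uset : Set (Euc m)) (T : ℝ) (u : ℝ → Euc m) : Prop :=
  Measurable u ∧ ∀ t ∈ Icc (0:ℝ) T, u t ∈ Uset

/-- Carathéodory solution of `ẋ = f(x,u(t))` on `[0,T]` with `x(0) = x0`. -/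
def IsOLSol {d m : ℕ} (f : Euc d → Euc m → Euc d) (u : ℝ → Euc m) (T : ℝ)
    (x0 : Euc d) (x : ℝ → Euc d) : Prop :=
  ContinuousOn x (Icc 0 T) ∧ x 0 = x0 ∧
  IntegrableOn (fun s => f (x s) (u s)) (Icc 0 T) ∧
  ∀ t ∈ Icc (0:ℝ) T, x t = x0 + ∫ s in (0:ℝ)..t, f (x s) (u s)

/-- Open loop `S`-constrained controllability to `Sig`. -/
def OLConstrainedControllable {d m : ℕ} (f : Euc d → Euc m → Euc d) (Uset : Set (Euc m))
    (S Sig : Set (Euc d)) : Prop :=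
  ∀ x0 ∈ S, ∃ T : ℝ, 0 ≤ T ∧ ∃ u : ℝ → Euc m, IsAdmControl Uset T u ∧
    ∃ x : ℝ → Euc d, IsOLSol f u T x0 x ∧ (∀ t ∈ Icc (0:ℝ) T, x t ∈ S) ∧ x T ∈ Sig

/-- A finite patchy feedback `(Ω_1,…,Ω_N; u_1,…,u_N)` for `f` on the open set `D`. -/
structure IsPatchyFeedback {d m : ℕ} (f : Euc d → Euc m → Euc d) (Uset : Set (Euc m))
    (D : Set (Euc d)) {N : ℕ} (Ω : Fin N → Set (Euc d)) (uv : Fin N → Euc m) : Prop where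
  patch_open : ∀ i, IsOpen (Ω i)
  ctrl_mem : ∀ i, uv i ∈ Uset
  cover : D = ⋃ i, Ω i
  inward : ∀ i : Fin N, ∀ x ∈ frontier (Ω i) \ ⋃ j ∈ Ioi i, Ω j,
    f x (uv i) ∈ interior (bouligandCone (Ω i) x)

/-- `U` is the feedback law associated with the patches `(Ω_i, u_i)`:
`U(x) = u_{i*(x)}` with `i*(x) = max {i : x ∈ Ω_i}`. -/
def IsFeedbackLaw {d m N : ℕ} (Ω : Fin N → Set (Euc d)) (uv : Fin N → Euc m)
    (U : Euc d → Euc m) : Prop :=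
  ∀ i : Fin N, ∀ x ∈ Ω i \ ⋃ j ∈ Ioi i, Ω j, U x = uv i

/-- Carathéodory solution of the closed-loop system `ẋ = f(x, U(x))` on `[0,T]`,
with values in `D`, starting at `x0`. -/
def IsCLSol {d m : ℕ} (f : Euc d → Euc m → Euc d) (U : Euc d → Euc m) (D : Set (Euc d))
    (T : ℝ) (x0 : Euc d) (x : ℝ → Euc d) : Prop :=
  ContinuousOn x (Icc 0 T) ∧ x 0 = x0 ∧ (∀ s ∈ Icc (0:ℝ) T, x s ∈ D) ∧
  IntegrableOn (fun s => f (x s) (U (x s))) (Icc 0 T) ∧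
  ∀ t ∈ Icc (0:ℝ) T, x t = x0 + ∫ s in (0:ℝ)..t, f (x s) (U (x s))

/-- A closed-loop solution that cannot be extended to a strictly larger time interval. -/
def MaximalCLSol {d m : ℕ} (f : Euc d → Euc m → Euc d) (U : Euc d → Euc m) (D : Set (Euc d))
    (T : ℝ) (x0 : Euc d) (x : ℝ → Euc d) : Prop :=
  IsCLSol f U D T x0 x ∧
  ¬ ∃ T' : ℝ, T < T' ∧ ∃ x' : ℝ → Euc d, IsCLSol f U D T' x0 x' ∧ ∀ t ∈ Icc (0:ℝ) T, x' t = x t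

/-- Carathéodory solution of the autonomous equation `ẋ = g(x)` on `[a,b]` with values in `Ω`. -/
def IsPVFSol {d : ℕ} (g : Euc d → Euc d) (Ω : Set (Euc d)) (a b : ℝ) (γ : ℝ → Euc d) : Prop :=
  ContinuousOn γ (Icc a b) ∧ (∀ t ∈ Icc a b, γ t ∈ Ω) ∧
  IntegrableOn (fun s => g (γ s)) (Icc a b) ∧
  ∀ t ∈ Icc a b, γ t = γ a + ∫ s in a..t, g (γ s)

/-- A patchy vector field `g` on the open set `Ω` with patches `(Ω_α, g_α)`. -/
structure IsPatchyVF {d : ℕ} (A : Type) [LinearOrder A] (Ωa : A → Set (Euc d))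
    (ga : A → Euc d → Euc d) (Ω : Set (Euc d)) (g : Euc d → Euc d) : Prop where
  patch_open : ∀ α, IsOpen (Ωa α)
  cover : Ω = ⋃ α, Ωa α
  locFin : LocallyFinite Ωa
  lip : ∀ α, ∃ K : NNReal, LipschitzWith K (ga α)
  inward : ∀ α, ∀ x ∈ frontier (Ωa α), ga α x ∈ interior (bouligandCone (Ωa α) x)
  sel : ∀ x ∈ Ω, ∃ α, x ∈ Ωa α ∧ (∀ β, x ∈ Ωa β → β ≤ α) ∧ g x = ga α x

/-!
`N_S^C(x)` is the cone spanned by the closure `Λ` of the set of limiting proximal normal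
directions, a compact subset of the unit sphere, and wedgedness forces `0 ∉ conv Λ`. So (a) says
that every `c ∈ conv Λ` is strictly opposed by some `v ∈ K`. Since `K` and `conv Λ` are convex
and `conv Λ` is compact, a Farkas-type separation (through the bipolar theorem) gives a single
`v ∈ K` opposing all of `conv Λ`, uniformly by compactness, and such a `v` is interior to the
polar cone `T_S^C(x)`. Conversely, an interior point `v` of a polar cone can be pushed a little
towards any nonzero `p` of the cone and stay in the polar, which forces `⟨v, p⟩ < 0`.
-/

open scoped RealInnerProductSpace

theorem isCompact_convexHull {E : Type*} [NormedAddCommGroup E] [NormedSpace ℝ E]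
    [FiniteDimensional ℝ E] {s : Set E} (hs : IsCompact s) : IsCompact (convexHull ℝ s) := by
  classical
  rcases s.eq_empty_or_nonempty with rfl | ⟨s₀, hs₀⟩
  · simp
  let n := Module.finrank ℝ E + 1
  suffices h : convexHull ℝ s = (fun q : (Fin n → ℝ) × (Fin n → E) => ∑ i, q.1 i • q.2 i) ''
      (stdSimplex ℝ (Fin n) ×ˢ univ.pi fun _ => s) by
    rw [h]
    exact ((isCompact_stdSimplex ℝ (Fin n)).prod (isCompact_univ_pi fun _ => hs)).image
      (by fun_prop)
  refine Subset.antisymm (fun x hx => ?_) ?_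
  · -- Carathéodory: `x` is a convex combination of at most `finrank ℝ E + 1` points of `s`.
    obtain ⟨ι, _, z, w, hzs, hz, hw0, hw1, rfl⟩ := eq_pos_convex_span_of_mem_convexHull hx
    obtain ⟨e⟩ : Nonempty (ι ↪ Fin n) := Function.Embedding.nonempty_of_card_le <| by
      simpa [n] using hz.card_le_finrank_succ.trans
        (Nat.succ_le_succ (Submodule.finrank_le _))
    refine ⟨(Function.extend e w 0, Function.extend e z fun _ => s₀), ⟨⟨fun j => ?_, ?_⟩,
      fun j _ => ?_⟩, ?_⟩
    · by_cases hj : ∃ i, e i = j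
      · obtain ⟨i, rfl⟩ := hj
        simpa [e.injective.extend_apply] using (hw0 i).le
      · simp [Function.extend_apply' _ _ _ hj]
    · rw [← hw1]
      refine (Fintype.sum_of_injective e e.injective _ _ (fun j hj => ?_) fun i => ?_).symm
      · exact Function.extend_apply' _ _ _ (by simpa using hj)
      · exact (e.injective.extend_apply _ _ _).symm
    · by_cases hj : ∃ i, e i = j
      · obtain ⟨i, rfl⟩ := hj
        simpa [e.injective.extend_apply] using hzs (mem_range_self i)
      · simpa [Function.extend_apply' _ _ _ hj] using hs₀
    · refine (Fintype.sum_of_injective e e.injective _ _ (fun j hj => ?_) fun i => ?_).symm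
      · simp [Function.extend_apply' _ _ _ (by simpa using hj)]
      · simp [e.injective.extend_apply]
  · rintro _ ⟨q, ⟨hq, hqs⟩, rfl⟩
    exact (convex_convexHull ℝ s).sum_mem (fun i _ => hq.1 i) hq.2
      fun i _ => subset_convexHull ℝ s (hqs i (mem_univ i))

section Hull
variable {E : Type*} [AddCommGroup E] [Module ℝ E]

theorem Convex.exists_eq_smul_of_mem_hull {K : Set E} (hK : Convex ℝ K) (hne : K.Nonempty)
    {y : E} (hy : y ∈ PointedCone.hull ℝ K) : ∃ t : ℝ, 0 ≤ t ∧ ∃ v ∈ K, y = t • v := by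
  induction hy using Submodule.span_induction with
  | mem v hv => exact ⟨1, zero_le_one, v, hv, (one_smul ℝ v).symm⟩
  | zero => exact ⟨0, le_rfl, hne.some, hne.some_mem, (zero_smul ℝ _).symm⟩
  | add _ _ _ _ h₁ h₂ =>
    obtain ⟨t₁, ht₁, v₁, hv₁, rfl⟩ := h₁
    obtain ⟨t₂, ht₂, v₂, hv₂, rfl⟩ := h₂
    obtain ⟨v, hv, hsum⟩ : t₁ • v₁ + t₂ • v₂ ∈ (t₁ + t₂) • K := by
      rw [hK.add_smul ht₁ ht₂]
      exact add_mem_add (smul_mem_smul_set hv₁) (smul_mem_smul_set hv₂)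
    exact ⟨t₁ + t₂, add_nonneg ht₁ ht₂, v, hv, hsum.symm⟩
  | smul a _ _ h =>
    obtain ⟨t, ht, v, hv, rfl⟩ := h
    exact ⟨a * t, mul_nonneg a.2 ht, v, hv, smul_smul (a : ℝ) t v⟩

theorem exists_neg_mem_hull_of_zero_mem_convexHull {s : Set E}
    (h : (0 : E) ∈ convexHull ℝ s) : ∃ z ∈ s, -z ∈ PointedCone.hull ℝ s := by
  classical
  obtain ⟨ι, _, z, w, hzs, -, hw0, hw1, hsum⟩ := eq_pos_convex_span_of_mem_convexHull h
  obtain ⟨i⟩ : Nonempty ι := by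
    by_contra hι
    simp [not_nonempty_iff.1 hι] at hw1
  have hrest : -z i = (w i)⁻¹ • ∑ j ∈ Finset.univ.erase i, w j • z j := by
    rw [eq_inv_smul_iff₀ (hw0 i).ne', smul_neg, ← add_eq_zero_iff_neg_eq,
      Finset.add_sum_erase _ (fun j => w j • z j) (Finset.mem_univ i), hsum]
  refine ⟨z i, hzs (mem_range_self i), hrest ▸ ?_⟩
  refine (PointedCone.hull ℝ s).smul_mem (inv_nonneg.2 (hw0 i).le)
    (Submodule.sum_mem _ fun j _ => ?_)
  exact (PointedCone.hull ℝ s).smul_mem (hw0 j).le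
    (PointedCone.subset_hull (hzs (mem_range_self j)))

end Hull

section Inner
variable {E : Type*} [NormedAddCommGroup E] [InnerProductSpace ℝ E]

theorem inner_neg_of_mem_interior_polar {N : Set E} {v p : E}
    (hv : v ∈ interior {v | ∀ p ∈ N, ⟪p, v⟫ ≤ 0}) (hp : p ∈ N) (hp0 : p ≠ 0) : ⟪v, p⟫ < 0 := by
  have hline : Tendsto (fun t : ℝ => v + t • p) (𝓝[>] 0) (𝓝 v) := by
    have := ((continuous_const.add (continuous_id.smul continuous_const)).tendsto (0 : ℝ)
      (f := fun t : ℝ => v + t • p))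
    simpa using this.mono_left nhdsWithin_le_nhds
  obtain ⟨t, hpt, ht⟩ :=
    ((hline.eventually (mem_interior_iff_mem_nhds.1 hv)).and self_mem_nhdsWithin).exists
  have h := hpt p hp
  rw [inner_add_right, real_inner_smul_right, real_inner_self_eq_norm_sq, real_inner_comm] at h
  have : 0 < t * ‖p‖ ^ 2 := mul_pos ht (by positivity)
  linarith

theorem inner_nonpos_of_mem_hull {s : Set E} {v p : E} (h : ∀ c ∈ s, ⟪c, v⟫ ≤ 0)
    (hp : p ∈ PointedCone.hull ℝ s) : ⟪p, v⟫ ≤ 0 := by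
  induction hp using Submodule.span_induction with
  | mem c hc => exact h c hc
  | zero => simp
  | add _ _ _ _ h₁ h₂ => rw [inner_add_left]; exact add_nonpos h₁ h₂
  | smul a _ _ h' =>
    exact (real_inner_smul_left _ _ (a : ℝ)).trans_le (mul_nonpos_of_nonneg_of_nonpos a.2 h')

theorem exists_forall_inner_neg_of_forall_exists_inner_neg [CompleteSpace E] {K M : Set E}
    (hK : Convex ℝ K) (hKne : K.Nonempty) (hM : Convex ℝ M) (hMc : IsCompact M)
    (h : ∀ c ∈ M, ∃ v ∈ K, ⟪v, c⟫ < 0) : ∃ v ∈ K, ∀ c ∈ M, ⟪v, c⟫ < 0 := by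
  have hdisj : Disjoint M (ProperCone.innerDual K) := disjoint_left.2 fun c hc hcK => by
    obtain ⟨v, hv, hvc⟩ := h c hc
    exact (hcK hv).not_gt hvc
  obtain ⟨f, hf, hfM⟩ := (ProperCone.innerDual K).hyperplane_separation hM hMc hdisj
  set w := (InnerProductSpace.toDual ℝ E).symm f
  have hw : ∀ y, ⟪w, y⟫ = f y := fun y => InnerProductSpace.toDual_symm_apply
  -- By the bipolar theorem, `w` lies in the closed cone spanned by `K`.
  let P : ProperCone ℝ E := Submodule.closure (PointedCone.hull ℝ K)
  have hwP : w ∈ closure (PointedCone.hull ℝ K : Set E) := by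
    have : w ∈ P := by
      rw [← ProperCone.innerDual_innerDual P]
      intro y hy
      change 0 ≤ ⟪y, w⟫
      rw [real_inner_comm, hw]
      exact hf y (ProperCone.innerDual_le_innerDual (PointedCone.subset_hull.trans
        (subset_closure (s := (PointedCone.hull ℝ K : Set E)))) hy)
    rwa [Submodule.mem_closure_iff, ← SetLike.mem_coe, Submodule.topologicalClosure_coe] at this
  obtain ⟨η, hη, hwη⟩ := hMc.exists_forall_le' (f := fun c => -⟪w, c⟫) (a := 0)
    (by fun_prop) fun c hc => by simpa [hw] using hfM c hc
  obtain ⟨R, hR, hMR⟩ := hMc.isBounded.exists_pos_norm_le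
  obtain ⟨y, hy, hwy⟩ := Metric.mem_closure_iff.1 hwP (η / R) (by positivity)
  obtain ⟨t, ht, v, hv, rfl⟩ := hK.exists_eq_smul_of_mem_hull hKne hy
  refine ⟨v, hv, fun c hc => ?_⟩
  have hnear : ‖w - t • v‖ * ‖c‖ < η := by
    rw [← dist_eq_norm]
    calc dist w (t • v) * ‖c‖ ≤ dist w (t • v) * R := by gcongr; exact hMR c hc
      _ < η / R * R := by gcongr
      _ = η := div_mul_cancel₀ η hR.ne'
  have hneg : t * ⟪v, c⟫ < 0 := by
    calc t * ⟪v, c⟫ = ⟪w, c⟫ + ⟪t • v - w, c⟫ := by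
          rw [inner_sub_left, real_inner_smul_left]; ring
      _ ≤ -η + ‖w - t • v‖ * ‖c‖ := by
        rw [← norm_neg, neg_sub]
        linarith [hwη c hc, real_inner_le_norm (t • v - w) c]
      _ < 0 := by linarith
  exact neg_of_mul_neg_right hneg ht

end Inner

section Clarke
variable {d : ℕ} {S : Set (Euc d)} {x : Euc d}

theorem closure_limProxDirs_subset_sphere : closure (limProxDirs S x) ⊆ sphere 0 1 :=
  closure_minimal (fun v hv => by simpa using hv.1) isClosed_sphere

theorem isCompact_closure_limProxDirs : IsCompact (closure (limProxDirs S x)) :=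
  (isCompact_sphere 0 1).of_isClosed_subset isClosed_closure closure_limProxDirs_subset_sphere

theorem clarkeNormalCone_eq_hull :
    clarkeNormalCone S x = PointedCone.hull ℝ (closure (limProxDirs S x)) := by
  set L := limProxDirs S x
  set G := closure (convexHull ℝ ({0} ∪ L))
  ext p
  constructor
  · rintro ⟨t, ht, ξ, hξ, rfl⟩
    have hG : G ⊆ convexHull ℝ (insert 0 (closure L)) :=
      closure_minimal
        (convexHull_mono (by rw [singleton_union]; exact insert_subset_insert subset_closure))
        (isCompact_convexHull (isCompact_closure_limProxDirs.insert 0)).isClosed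
    have hhull : convexHull ℝ (insert 0 (closure L)) ⊆ PointedCone.hull ℝ (closure L) :=
      convexHull_min (insert_subset (zero_mem _) PointedCone.subset_hull) (PointedCone.convex _)
    exact (PointedCone.hull ℝ (closure L)).smul_mem ht (hhull (hG hξ))
  · intro hp
    have hLG : closure L ⊆ G := closure_mono (subset_union_right.trans (subset_convexHull ℝ _))
    have h0G : (0 : Euc d) ∈ G := subset_closure (subset_convexHull ℝ _ (Or.inl rfl))
    obtain ⟨t, ht, ξ, hξ, rfl⟩ := (convex_convexHull ℝ _).closure.exists_eq_smul_of_mem_hull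
      ⟨0, h0G⟩ (Submodule.span_mono hLG hp)
    exact ⟨t, ht, ξ, hξ, rfl⟩

theorem zero_notMem_convexHull_closure_limProxDirs (hw : WedgedAt S x) :
    (0 : Euc d) ∉ convexHull ℝ (closure (limProxDirs S x)) := by
  intro h0
  obtain ⟨z, hz, hnz⟩ := exists_neg_mem_hull_of_zero_mem_convexHull h0
  have hzN : z ∈ clarkeNormalCone S x ∩ -clarkeNormalCone S x := by
    rw [clarkeNormalCone_eq_hull]
    exact ⟨PointedCone.subset_hull hz, hnz⟩
  rw [show clarkeNormalCone S x ∩ -clarkeNormalCone S x = {0} from hw] at hzN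
  obtain rfl : z = 0 := hzN
  simpa using closure_limProxDirs_subset_sphere hz

theorem mem_interior_clarkeTangentCone {v : Euc d}
    (hv : ∀ c ∈ closure (limProxDirs S x), ⟪c, v⟫ < 0) :
    v ∈ interior (clarkeTangentCone S x) := by
  obtain ⟨η, hη, hvη⟩ := isCompact_closure_limProxDirs.exists_forall_le'
    (f := fun c => -⟪c, v⟫) (a := 0) (by fun_prop) fun c hc => neg_pos.2 (hv c hc)
  refine mem_interior.2 ⟨ball v η, fun u hu p hp => ?_, isOpen_ball, mem_ball_self hη⟩
  rw [clarkeNormalCone_eq_hull] at hp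
  refine inner_nonpos_of_mem_hull (fun c hc => ?_) hp
  have hc1 : ‖c‖ = 1 := by simpa using closure_limProxDirs_subset_sphere hc
  have hclose : ⟪c, u - v⟫ < η := by
    calc ⟪c, u - v⟫ ≤ ‖c‖ * ‖u - v‖ := real_inner_le_norm _ _
      _ < η := by simpa [hc1, dist_eq_norm] using hu
  have := hvη c hc
  rw [inner_sub_right] at hclose
  linarith

end Clarke

theorem inwardness_equivalence_general {d : ℕ} (S : Set (Euc d))
    (x : Euc d) (hw : WedgedAt S x)
    (K : Set (Euc d)) (hKne : K.Nonempty) (hKconv : Convex ℝ K) :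
    (∀ p ∈ clarkeNormalCone S x, p ≠ 0 → ∃ v ∈ K, rinner v p < 0) ↔
      (K ∩ interior (clarkeTangentCone S x)).Nonempty := by
  set L := closure (limProxDirs S x)
  constructor
  · intro h
    have hM : ∀ c ∈ convexHull ℝ L, ∃ v ∈ K, ⟪v, c⟫ < 0 := fun c hc =>
      h c (clarkeNormalCone_eq_hull ▸
          convexHull_min PointedCone.subset_hull (PointedCone.convex _) hc)
        (ne_of_mem_of_not_mem hc (zero_notMem_convexHull_closure_limProxDirs hw))
    obtain ⟨v, hvK, hv⟩ := exists_forall_inner_neg_of_forall_exists_inner_neg hKconv hKne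
      (convex_convexHull ℝ L) (isCompact_convexHull isCompact_closure_limProxDirs) hM
    refine ⟨v, hvK, mem_interior_clarkeTangentCone fun c hc => ?_⟩
    rw [real_inner_comm]
    exact hv c (subset_convexHull ℝ L hc)
  · rintro ⟨v, hvK, hvT⟩ p hp hp0
    exact ⟨v, hvK, inner_neg_of_mem_interior_polar hvT hp hp0⟩

/-- **Equivalence (2.12) (restatement of (S2)).** For a closed set `S` wedged at `x ∈ ∂S` and a
nonempty compact convex set `K` (the velocity set `f(x,U)`), the following are equivalent:
(a) for every `p ∈ N_S^C(x) ∖ {0}` some `v ∈ K` has `⟨v,p⟩ < 0`;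
(b) `K` meets the interior of the Clarke tangent cone `T_S^C(x)`. -/
theorem inwardness_equivalence {d : ℕ} (S : Set (Euc d)) (hS : IsClosed S)
    (x : Euc d) (hx : x ∈ frontier S) (hw : WedgedAt S x)
    (K : Set (Euc d)) (hKne : K.Nonempty) (hKcomp : IsCompact K) (hKconv : Convex ℝ K) :
    (∀ p ∈ clarkeNormalCone S x, p ≠ 0 → ∃ v ∈ K, rinner v p < 0) ↔
      (K ∩ interior (clarkeTangentCone S x)).Nonempty :=
  inwardness_equivalence_general S x hw K hKne hKconv
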